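/- Fix r ∉ ℕ with r > 1, set n := ⌊r⌋ + 1 and ρ := r − ⌊r⌋ ∈ (0,1), and let 0 = d̂_1 < d̂_2 < … < d̂_{n+1} and 0 = d̄_1 < d̄_2 < … < d̄_n be real numbers with d̄_j < d̂_j for 2 ≤ j ≤ n. Fix λ > 0, set ẑ(λ) := Σ_{j=1}^{n+1} e^{−λ d̂_j} and z̄(λ) := Σ_{j=1}^{n} e^{−λ d̄_j}, and define m̂_j := e^{−λ d̂_j}/ẑ(λ) (j = 1,…,n+1) and m̄_j := e^{−λ d̄_j}/z̄(λ) (j = 1,…,n). Define the back-transformed masses m_{2j−1} := Σ_{l=1}^{j} m̂_l − Σ_{l=1}^{j−1} m̄_l and m_{2j} := Σ_{l=1}^{j} (m̄_l − m̂_l). If ẑ(λ) > z̄(λ), then: (i) m̄_j > m̂_j ≥ m̂_{n+1} for all j ∈ {1,…,n}; (ii) the odd-indexed masses are strictly decreasing, m_{2j+1} < m_{2j−1} for j ∈ {1,…,n−1}, and the even-indexed masses are strictly increasing, m_{2j+2} > m_{2j} for j ∈ {1,…,n−1}. In particular m_{2n−1} is the smallest odd-indexed mass and m_2 the smallest even-indexed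 mass. -/

import Mathlib

open Set

/-- Properties of the Boltzmann combined masses and the
back-transformed masses in the non-integer case: if `ẑ(λ) > z̄(λ)` then
`m̄_j > m̂_j ≥ m̂_{n+1}` for all `j ∈ {1,…,n}`, the odd-indexed masses
`m_{2j−1}` are strictly decreasing, and the even-indexed masses `m_{2j}` are
strictly increasing; in particular `m_{2n−1}` is the smallest odd-indexed mass and
`m_2` the smallest even-indexed mass.  Here `modd j` denotes `m_{2j−1}` and
`meven j` denotes `m_{2j}`. -/
theorem stmt12 (r : ℝ) (hrnat : ¬ ∃ k : ℕ, r = (k : ℝ)) (hr1 : 1 < r)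
    (n : ℕ) (hn : n = ⌊r⌋₊ + 1) (ρ : ℝ) (hρ : ρ = r - (⌊r⌋₊ : ℝ))
    (dhat dbar : ℕ → ℝ)
    (hdhat1 : dhat 1 = 0)
    (hdhatmono : ∀ j, 1 ≤ j → j ≤ n → dhat j < dhat (j + 1))
    (hdbar1 : dbar 1 = 0)
    (hdbarmono : ∀ j, 1 ≤ j → j ≤ n - 1 → dbar j < dbar (j + 1))
    (hlt : ∀ j, 2 ≤ j → j ≤ n → dbar j < dhat j)
    (lam : ℝ) (hlam : 0 < lam)
    (zhat zbar : ℝ)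
    (hzhat : zhat = ∑ j ∈ Finset.Icc 1 (n + 1), Real.exp (-lam * dhat j))
    (hzbar : zbar = ∑ j ∈ Finset.Icc 1 n, Real.exp (-lam * dbar j))
    (mhat mbar : ℕ → ℝ)
    (hmhat : ∀ j, mhat j = Real.exp (-lam * dhat j) / zhat)
    (hmbar : ∀ j, mbar j = Real.exp (-lam * dbar j) / zbar)
    (modd meven : ℕ → ℝ)
    (hmodd : ∀ j, modd j
      = (∑ l ∈ Finset.Icc 1 j, mhat l) - ∑ l ∈ Finset.Icc 1 (j - 1), mbar l)
    (hmeven : ∀ j, meven j = ∑ l ∈ Finset.Icc 1 j, (mbar l - mhat l))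
    (hz : zhat > zbar) :
    (∀ j ∈ Finset.Icc 1 n, mbar j > mhat j ∧ mhat j ≥ mhat (n + 1)) ∧
    (∀ j ∈ Finset.Icc 1 (n - 1), modd (j + 1) < modd j ∧ meven (j + 1) > meven j) ∧
    (∀ j ∈ Finset.Icc 1 n, modd n ≤ modd j ∧ meven 1 ≤ meven j) := by
  have hn2 : 2 ≤ n := by
    have h1 : 1 ≤ ⌊r⌋₊ := Nat.le_floor (by exact_mod_cast hr1.le)
    omega
  have hzbar0 : 0 < zbar := by
    rw [hzbar]
    apply Finset.sum_pos (fun i _ => Real.exp_pos _)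
    exact ⟨1, by simp; omega⟩
  have hzhat0 : 0 < zhat := lt_trans hzbar0 hz
  have hdchain : ∀ j k : ℕ, 1 ≤ j → j ≤ k → k ≤ n + 1 → dhat j ≤ dhat k := by
    intro j k hj hjk hk
    induction k, hjk using Nat.le_induction with
    | base => exact le_refl _
    | succ k hk' ih =>
      have h1 := hdhatmono k (le_trans hj hk') (by omega)
      have h2 := ih (by omega)
      linarith
  have hhatle : ∀ j k : ℕ, 1 ≤ j → j ≤ k → k ≤ n + 1 → mhat k ≤ mhat j := by
    intro j k hj hjk hk
    rw [hmhat, hmhat]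
    have hd := hdchain j k hj hjk hk
    have : Real.exp (-lam * dhat k) ≤ Real.exp (-lam * dhat j) := by
      apply Real.exp_le_exp.mpr; nlinarith
    gcongr
  have hA : ∀ j : ℕ, 1 ≤ j → j ≤ n → mbar j > mhat j := by
    intro j hj hjn
    have hd : dbar j ≤ dhat j := by
      rcases Nat.lt_or_ge j 2 with h | h
      · interval_cases j; rw [hdhat1, hdbar1]
      · exact (hlt j h hjn).le
    rw [hmhat, hmbar]
    have he : Real.exp (-lam * dhat j) ≤ Real.exp (-lam * dbar j) := by
      apply Real.exp_le_exp.mpr; nlinarith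
    have h1 : Real.exp (-lam * dhat j) / zhat < Real.exp (-lam * dhat j) / zbar :=
      div_lt_div_of_pos_left (Real.exp_pos _) hzbar0 hz
    have h2 : Real.exp (-lam * dhat j) / zbar ≤ Real.exp (-lam * dbar j) / zbar :=
      (div_le_div_iff_of_pos_right hzbar0).mpr he
    linarith
  have hmoddstep : ∀ j : ℕ, 1 ≤ j → modd (j + 1) = modd j + mhat (j + 1) - mbar j := by
    intro j hj
    rw [hmodd, hmodd]
    rw [Finset.sum_Icc_succ_top (by omega : 1 ≤ j + 1) mhat]
    have : j + 1 - 1 = (j - 1) + 1 := by omega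
    rw [this, Finset.sum_Icc_succ_top (by omega : 1 ≤ j - 1 + 1) mbar]
    have : j - 1 + 1 = j := by omega
    rw [this]; ring
  have hmevenstep : ∀ j : ℕ, meven (j + 1) = meven j + (mbar (j + 1) - mhat (j + 1)) := by
    intro j
    rw [hmeven, hmeven, Finset.sum_Icc_succ_top (by omega : 1 ≤ j + 1)]
  have hB : ∀ j ∈ Finset.Icc 1 (n - 1), modd (j + 1) < modd j ∧ meven (j + 1) > meven j := by
    intro j hj
    simp only [Finset.mem_Icc] at hj
    constructor
    · have h1 := hA j hj.1 (by omega)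
      have h2 := hhatle j (j + 1) hj.1 (by omega) (by omega)
      rw [hmoddstep j hj.1]; linarith
    · have h1 := hA (j + 1) (by omega) (by omega)
      rw [hmevenstep j]; linarith
  refine ⟨?_, hB, ?_⟩
  · intro j hj
    simp only [Finset.mem_Icc] at hj
    exact ⟨hA j hj.1 hj.2, hhatle j (n + 1) hj.1 (by omega) le_rfl⟩
  · have hmono : ∀ j k : ℕ, 1 ≤ j → j ≤ k → k ≤ n → modd k ≤ modd j ∧ meven j ≤ meven k := by
      intro j k hj hjk hk
      induction k, hjk using Nat.le_induction with
      | base => exact ⟨le_refl _, le_refl _⟩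
      | succ k hk' ih =>
        have hstep := hB k (by simp only [Finset.mem_Icc]; omega)
        have := ih (by omega)
        exact ⟨le_trans hstep.1.le this.1, le_trans this.2 hstep.2.le⟩
    intro j hj
    simp only [Finset.mem_Icc] at hj
    exact ⟨(hmono j n hj.1 hj.2 le_rfl).1, (hmono 1 j le_rfl hj.1 hj.2).2⟩
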